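/- arXiv:math/0503588 — 4 statements merged into one kernel-verified Lean document; each statement's English description precedes it below -/
import Mathlib

section
/- Let u and v be almost-excessive functions for (p_t). Then the quantity (1/t)∫_E (u − p_t u)·v dm is nondecreasing as t ↓ 0; that is, for all 0 < s ≤ t one has (1/s)∫_E (u − p_s u)·v dm ≥ (1/t)∫_E (u − p_t u)·v dm. -/
open MeasureTheory ProbabilityTheory Filter
open scoped ENNReal
open Finset Set

/-!
Write `A r = ∫ (u - p_r u) v dm`. The semigroup law and symmetry give, for a mesh `h > 0`,
`A ((k + 1) h) = A (k h) + ∫ (u - p_h u) · p_{kh} v dm`, so `A (k h)` is the `k`-th partial sum of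
a sequence which is antitone because `v` is excessive. Averages of an antitone sequence decrease,
hence `A (M h) / M ≤ A (N h) / N` for `N ≤ M`. With `h = s / N` and `M = ⌈t / h⌉`, monotonicity
of `A` gives `A t / t ≤ (1 + s / (N t)) · A s / s`, and `N → ∞` finishes.
-/
theorem Antitone.nsmul_sum_range_le {α : Type*} [AddCommMonoid α] [PartialOrder α]
    [IsOrderedAddMonoid α] {D : ℕ → α} (hD : Antitone D) {N M : ℕ} (hNM : N ≤ M) :
    N • ∑ j ∈ range M, D j ≤ M • ∑ j ∈ range N, D j := by
  have htail : ∑ j ∈ Ico N M, D j ≤ (M - N) • D N := by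
    simpa using sum_le_card_nsmul (Ico N M) D (D N) fun j hj => hD (Finset.mem_Ico.mp hj).1
  have hhead : N • D N ≤ ∑ j ∈ range N, D j := by
    simpa using card_nsmul_le_sum (range N) D (D N) fun j hj => hD (mem_range.mp hj).le
  calc N • ∑ j ∈ range M, D j = N • ∑ j ∈ range N, D j + N • ∑ j ∈ Ico N M, D j := by
        rw [← sum_range_add_sum_Ico D hNM, nsmul_add]
    _ ≤ N • ∑ j ∈ range N, D j + (M - N) • (N • D N) := by
        grw [htail, smul_comm]
    _ ≤ N • ∑ j ∈ range N, D j + (M - N) • ∑ j ∈ range N, D j := by grw [hhead]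
    _ = M • ∑ j ∈ range N, D j := by rw [← add_nsmul, Nat.add_sub_cancel' hNM]

theorem natCast_mul_le_of_grid {A : ℝ → ℝ≥0∞} (hA : MonotoneOn A (Ioi 0))
    (hgrid : ∀ h : ℝ, 0 < h → ∀ N M : ℕ, 0 < N → N ≤ M →
      (N : ℝ≥0∞) * A (M * h) ≤ M * A (N * h))
    {s t : ℝ} (hs : 0 < s) (hst : s ≤ t) {N : ℕ} (hN : 0 < N) :
    (N : ℝ≥0∞) * A t ≤ (N * ENNReal.ofReal (t / s) + 1) * A s := by
  have ht : 0 < t := hs.trans_le hst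
  set h := s / N with h_def
  have hh : 0 < h := by positivity
  have hNh : (N : ℝ) * h = s := by rw [h_def]; field_simp
  set M := ⌈t / h⌉₊
  have htM : t ≤ M * h := (div_le_iff₀ hh).1 (Nat.le_ceil _)
  have hNM : N ≤ M := by
    have : (N : ℝ) ≤ t / h := (le_div_iff₀ hh).2 (hNh.trans_le hst)
    exact_mod_cast this.trans (Nat.le_ceil _)
  have hM : (M : ℝ≥0∞) ≤ N * ENNReal.ofReal (t / s) + 1 := by
    have hMr : (M : ℝ) ≤ N * (t / s) + 1 := by
      have : t / h = N * (t / s) := by rw [h_def]; field_simp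
      exact this ▸ (Nat.ceil_lt_add_one (by positivity)).le
    rw [← ENNReal.ofReal_natCast, ← ENNReal.ofReal_natCast N,
      ← ENNReal.ofReal_mul (Nat.cast_nonneg N), ← ENNReal.ofReal_one,
      ← ENNReal.ofReal_add (by positivity) zero_le_one]
    exact ENNReal.ofReal_le_ofReal hMr
  calc (N : ℝ≥0∞) * A t ≤ N * A (M * h) := by
        gcongr; exact hA ht (ht.trans_le htM) htM
    _ ≤ M * A (N * h) := hgrid h hh N M hN hNM
    _ = M * A s := by rw [hNh]
    _ ≤ (N * ENNReal.ofReal (t / s) + 1) * A s := by gcongr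

theorem antitoneOn_inv_mul_of_grid {A : ℝ → ℝ≥0∞} (hA : MonotoneOn A (Ioi 0))
    (hgrid : ∀ h : ℝ, 0 < h → ∀ N M : ℕ, 0 < N → N ≤ M →
      (N : ℝ≥0∞) * A (M * h) ≤ M * A (N * h)) :
    AntitoneOn (fun t => (ENNReal.ofReal t)⁻¹ * A t) (Ioi 0) := by
  intro s hs t ht hst
  obtain hAs | hAs := eq_or_ne (A s) ∞
  · simp [hAs, ENNReal.mul_top]
  have hbound : ∀ N : ℕ, 0 < N → A t ≤ (ENNReal.ofReal (t / s) + (N : ℝ≥0∞)⁻¹) * A s := by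
    intro N hN
    have hN0 : (N : ℝ≥0∞) ≠ 0 := by exact_mod_cast hN.ne'
    calc A t = (N : ℝ≥0∞)⁻¹ * (N * A t) := (ENNReal.inv_mul_cancel_left hN0 (by simp)).symm
      _ ≤ (N : ℝ≥0∞)⁻¹ * ((N * ENNReal.ofReal (t / s) + 1) * A s) := by
          grw [natCast_mul_le_of_grid hA hgrid hs hst hN]
      _ = (ENNReal.ofReal (t / s) + (N : ℝ≥0∞)⁻¹) * A s := by
          rw [← mul_assoc, mul_add, ENNReal.inv_mul_cancel_left hN0 (by simp), mul_one]
  have hlim : Tendsto (fun N : ℕ => (ENNReal.ofReal (t / s) + (N : ℝ≥0∞)⁻¹) * A s) atTop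
      (nhds (ENNReal.ofReal (t / s) * A s)) :=
    ENNReal.Tendsto.mul_const
      (by simpa using tendsto_const_nhds.add ENNReal.tendsto_inv_nat_nhds_zero) (Or.inr hAs)
  have hts : A t ≤ ENNReal.ofReal (t / s) * A s :=
    ge_of_tendsto hlim ((eventually_gt_atTop 0).mono hbound)
  rw [ENNReal.ofReal_div_of_pos hs, div_eq_mul_inv] at hts
  calc (ENNReal.ofReal t)⁻¹ * A t
      ≤ (ENNReal.ofReal t)⁻¹ * (ENNReal.ofReal t * (ENNReal.ofReal s)⁻¹ * A s) := by grw [hts]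
    _ = (ENNReal.ofReal s)⁻¹ * A s := by
      rw [mul_assoc, ENNReal.inv_mul_cancel_left (by simpa using ht) ENNReal.ofReal_ne_top]

namespace KernelSemigroup

variable {E : Type*} [MeasurableSpace E] {m : Measure E}

noncomputable def kernelAct (κ : Kernel E E) (f : E → ℝ≥0∞) : E → ℝ≥0∞ :=
  fun x => ∫⁻ y, f y ∂κ x

theorem measurable_kernelAct (κ : Kernel E E) {f : E → ℝ≥0∞} (hf : Measurable f) :
    Measurable (kernelAct κ f) :=
  (Measure.measurable_lintegral hf).comp κ.measurable

theorem kernelAct_add (κ : Kernel E E) {f : E → ℝ≥0∞} (hf : Measurable f) (g : E → ℝ≥0∞) :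
    kernelAct κ (f + g) = kernelAct κ f + kernelAct κ g :=
  funext fun _ => lintegral_add_left hf g

def IsSymmetric (κ : Kernel E E) (m : Measure E) : Prop :=
  ∀ f g : E → ℝ≥0∞, Measurable f → Measurable g →
    ∫⁻ x, kernelAct κ f x * g x ∂m = ∫⁻ x, f x * kernelAct κ g x ∂m

/-- A symmetric kernel does not charge `m`-null sets: `∫ κ 1_N dm = ∫ 1_N κ 1 dm = 0`. -/
theorem IsSymmetric.kernelAct_ae_le {κ : Kernel E E} (hκ : IsSymmetric κ m) {f g : E → ℝ≥0∞}
    (hf : Measurable f) (hg : Measurable g) (hfg : f ≤ᵐ[m] g) :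
    kernelAct κ f ≤ᵐ[m] kernelAct κ g := by
  have hexcess : kernelAct κ (f - g) =ᵐ[m] 0 := by
    have hzero : ∫⁻ x, kernelAct κ (f - g) x * 1 ∂m = 0 := by
      rw [hκ _ _ (hf.sub hg) measurable_const]
      refine lintegral_eq_zero_of_ae_eq_zero ?_
      filter_upwards [hfg] with x hx
      simp [tsub_eq_zero_of_le hx]
    simpa using
      (lintegral_eq_zero_iff (measurable_kernelAct κ (hf.sub hg))).1 (by simpa using hzero)
  filter_upwards [hexcess] with x hx
  calc kernelAct κ f x ≤ kernelAct κ (g + (f - g)) x := lintegral_mono fun _ => le_add_tsub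
    _ = kernelAct κ g x := by rw [kernelAct_add κ hg, Pi.add_apply, hx, Pi.zero_apply, add_zero]

theorem IsSymmetric.kernelAct_ae_eq {κ : Kernel E E} (hκ : IsSymmetric κ m) {f g : E → ℝ≥0∞}
    (hf : Measurable f) (hg : Measurable g) (hfg : f =ᵐ[m] g) :
    kernelAct κ f =ᵐ[m] kernelAct κ g :=
  (hκ.kernelAct_ae_le hf hg hfg.le).antisymm (hκ.kernelAct_ae_le hg hf hfg.symm.le)

noncomputable def energy (m : Measure E) (κ : Kernel E E) (u v : E → ℝ≥0∞) : ℝ≥0∞ :=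
  ∫⁻ x, (u x - kernelAct κ u x) * v x ∂m

theorem IsSymmetric.energy_eq_add {κ η ρ : Kernel E E} (hκ : IsSymmetric κ m) {u v : E → ℝ≥0∞}
    (hρ : kernelAct ρ u = kernelAct κ (kernelAct η u)) (hu : Measurable u) (hv : Measurable v)
    (hufin : ∀ᵐ x ∂m, u x < ∞)
    (hκu : kernelAct κ u ≤ᵐ[m] u) (hηu : kernelAct η u ≤ᵐ[m] u) :
    energy m ρ u v = energy m κ u v + energy m η u (kernelAct κ v) := by
  set W := fun x => u x - kernelAct η u x
  have hW : Measurable W := hu.sub (measurable_kernelAct η hu)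
  have hηu_meas := measurable_kernelAct η hu
  have hu_split : u =ᵐ[m] W + kernelAct η u := by
    filter_upwards [hηu] with x hx
    exact (tsub_add_cancel_of_le hx).symm
  have hκu_split : kernelAct κ u =ᵐ[m] kernelAct κ W + kernelAct ρ u := by
    rw [hρ, ← kernelAct_add κ hW]
    exact hκ.kernelAct_ae_eq hu (hW.add hηu_meas) hu_split
  have hρu : kernelAct ρ u ≤ᵐ[m] kernelAct κ u := hρ ▸ hκ.kernelAct_ae_le hηu_meas hu hηu
  have hpointwise : (fun x => u x - kernelAct ρ u x)
      =ᵐ[m] fun x => (u x - kernelAct κ u x) + kernelAct κ W x := by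
    filter_upwards [hκu, hρu, hκu_split, hufin] with x hκx hρx hsplit hfin
    have hρfin : kernelAct ρ u x ≠ ∞ := (hρx.trans_lt (hκx.trans_lt hfin)).ne
    rw [← tsub_add_tsub_cancel hκx hρx, hsplit, Pi.add_apply,
      ENNReal.add_sub_cancel_right hρfin]
  calc energy m ρ u v = ∫⁻ x, ((u x - kernelAct κ u x) + kernelAct κ W x) * v x ∂m := by
        refine lintegral_congr_ae ?_
        filter_upwards [hpointwise] with x hx
        rw [hx]
    _ = energy m κ u v + ∫⁻ x, kernelAct κ W x * v x ∂m := by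
        simp_rw [add_mul]
        exact lintegral_add_left ((hu.sub (measurable_kernelAct κ hu)).mul hv) _
    _ = energy m κ u v + energy m η u (kernelAct κ v) := by rw [hκ W v hW hv]; rfl

def IsSemigroup (p : ℝ → Kernel E E) : Prop :=
  ∀ s t : ℝ, 0 < s → 0 < t → ∀ f : E → ℝ≥0∞, Measurable f →
    kernelAct (p (t + s)) f = kernelAct (p t) (kernelAct (p s) f)

variable {p : ℝ → Kernel E E} {u v : E → ℝ≥0∞}

theorem IsSemigroup.kernelAct_ae_le_of_le (hp : IsSemigroup p)
    (hsym : ∀ t, 0 < t → IsSymmetric (p t) m) (hu : Measurable u)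
    (hexc : ∀ t, 0 < t → kernelAct (p t) u ≤ᵐ[m] u) {a b : ℝ} (ha : 0 < a) (hab : a ≤ b) :
    kernelAct (p b) u ≤ᵐ[m] kernelAct (p a) u := by
  obtain rfl | hab := hab.eq_or_lt
  · rfl
  have hba : 0 < b - a := sub_pos.2 hab
  rw [show b = a + (b - a) by ring, hp _ _ hba ha u hu]
  exact (hsym a ha).kernelAct_ae_le (measurable_kernelAct _ hu) hu (hexc _ hba)

theorem IsSemigroup.monotoneOn_energy (hp : IsSemigroup p)
    (hsym : ∀ t, 0 < t → IsSymmetric (p t) m) (hu : Measurable u)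
    (hexc : ∀ t, 0 < t → kernelAct (p t) u ≤ᵐ[m] u) :
    MonotoneOn (fun r => energy m (p r) u v) (Ioi 0) := by
  intro a ha b _ hab
  refine lintegral_mono_ae ?_
  filter_upwards [hp.kernelAct_ae_le_of_le hsym hu hexc ha hab] with x hx
  gcongr

/-- `gridWeight p v h j = p_{jh} v`, with `p_0` read as the identity. -/
noncomputable def gridWeight (p : ℝ → Kernel E E) (v : E → ℝ≥0∞) (h : ℝ) : ℕ → E → ℝ≥0∞
  | 0 => v
  | j + 1 => kernelAct (p ((j + 1 : ℕ) * h)) v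

theorem IsSemigroup.gridWeight_succ_ae_le (hp : IsSemigroup p)
    (hsym : ∀ t, 0 < t → IsSymmetric (p t) m) (hv : Measurable v)
    (hexc : ∀ t, 0 < t → kernelAct (p t) v ≤ᵐ[m] v) {h : ℝ} (hh : 0 < h) (j : ℕ) :
    gridWeight p v h (j + 1) ≤ᵐ[m] gridWeight p v h j := by
  cases j with
  | zero => simpa [gridWeight] using hexc h hh
  | succ j => exact hp.kernelAct_ae_le_of_le hsym hv hexc (by positivity) (by gcongr; simp)

theorem IsSemigroup.energy_eq_sum_gridWeight (hp : IsSemigroup p)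
    (hsym : ∀ t, 0 < t → IsSymmetric (p t) m) (hu : Measurable u) (hv : Measurable v)
    (hufin : ∀ᵐ x ∂m, u x < ∞) (hexc : ∀ t, 0 < t → kernelAct (p t) u ≤ᵐ[m] u)
    {h : ℝ} (hh : 0 < h) (k : ℕ) :
    energy m (p ((k + 1 : ℕ) * h)) u v
      = ∑ j ∈ range (k + 1), energy m (p h) u (gridWeight p v h j) := by
  induction k with
  | zero => simp [gridWeight]
  | succ k ih =>
    have hkh : (0 : ℝ) < (k + 1 : ℕ) * h := by positivity
    have hstep : ((k + 1 + 1 : ℕ) : ℝ) * h = (k + 1 : ℕ) * h + h := by push_cast; ring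
    rw [sum_range_succ, ← ih, hstep,
      (hsym _ hkh).energy_eq_add (hp h _ hh hkh u hu) hu hv hufin (hexc _ hkh) (hexc h hh)]
    rfl

theorem IsSemigroup.natCast_mul_energy_le (hp : IsSemigroup p)
    (hsym : ∀ t, 0 < t → IsSymmetric (p t) m) (hu : Measurable u) (hv : Measurable v)
    (hufin : ∀ᵐ x ∂m, u x < ∞) (huexc : ∀ t, 0 < t → kernelAct (p t) u ≤ᵐ[m] u)
    (hvexc : ∀ t, 0 < t → kernelAct (p t) v ≤ᵐ[m] v) {h : ℝ} (hh : 0 < h) {N M : ℕ}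
    (hN : 0 < N) (hNM : N ≤ M) :
    (N : ℝ≥0∞) * energy m (p (M * h)) u v ≤ M * energy m (p (N * h)) u v := by
  have hgrid_anti : Antitone fun j => energy m (p h) u (gridWeight p v h j) := by
    refine antitone_nat_of_succ_le fun j => lintegral_mono_ae ?_
    filter_upwards [hp.gridWeight_succ_ae_le hsym hv hvexc hh j] with x hx
    gcongr
  obtain ⟨n, rfl⟩ := Nat.exists_eq_add_one_of_ne_zero hN.ne'
  obtain ⟨k, rfl⟩ := Nat.exists_eq_add_of_le hNM
  rw [Nat.add_right_comm,
    hp.energy_eq_sum_gridWeight hsym hu hv hufin huexc hh,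
    hp.energy_eq_sum_gridWeight hsym hu hv hufin huexc hh]
  simpa [nsmul_eq_mul] using hgrid_anti.nsmul_sum_range_le (by omega : n + 1 ≤ n + k + 1)

end KernelSemigroup

theorem energy_ratio_monotone_as_t_decreases_general
    {E : Type*} [MeasurableSpace E] (m : Measure E)
    (p : ℝ → Kernel E E)
    (hsemi : ∀ s t : ℝ, 0 < s → 0 < t → ∀ f : E → ℝ≥0∞, Measurable f → ∀ x : E,
        ∫⁻ y, f y ∂(p (t + s) x) = ∫⁻ y, ∫⁻ z, f z ∂(p s y) ∂(p t x))
    (hsym : ∀ t : ℝ, 0 < t → ∀ f g : E → ℝ≥0∞, Measurable f → Measurable g →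
        ∫⁻ x, (∫⁻ y, f y ∂(p t x)) * g x ∂m = ∫⁻ x, f x * ∫⁻ y, g y ∂(p t x) ∂m)
    (u v : E → ℝ≥0∞) (hu : Measurable u) (hv : Measurable v)
    (hufin : ∀ᵐ x ∂m, u x < ∞)
    (huexc : ∀ t : ℝ, 0 < t → (fun x => ∫⁻ y, u y ∂(p t x)) ≤ᵐ[m] u)
    (hvexc : ∀ t : ℝ, 0 < t → (fun x => ∫⁻ y, v y ∂(p t x)) ≤ᵐ[m] v)
    (s t : ℝ) (hs : 0 < s) (hst : s ≤ t) :
    (ENNReal.ofReal t)⁻¹ * ∫⁻ x, (u x - ∫⁻ y, u y ∂(p t x)) * v x ∂m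
      ≤ (ENNReal.ofReal s)⁻¹ * ∫⁻ x, (u x - ∫⁻ y, u y ∂(p s x)) * v x ∂m := by
  have hp : KernelSemigroup.IsSemigroup p := fun s t hs ht f hf => funext (hsemi s t hs ht f hf)
  exact antitoneOn_inv_mul_of_grid (hp.monotoneOn_energy hsym hu huexc)
    (fun h hh N M hN hNM => hp.natCast_mul_energy_le hsym hu hv hufin huexc hvexc hh hN hNM)
    hs (hs.trans_le hst) hst

/-- Let `(p_t)_{t>0}` be a symmetric sub-Markovian semigroup of kernels on a
measurable space `E` with a σ-finite measure `m`.  If `u` and `v` are almost-excessive for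
`(p_t)` (i.e. nonnegative measurable, finite `m`-a.e., with `p_t u ≤ u` `m`-a.e. for all `t > 0`
and `p_t u ↑ u` `m`-a.e. as `t ↓ 0`), then `(1/t) ∫ (u - p_t u) v dm` is nondecreasing as
`t ↓ 0`: for `0 < s ≤ t` one has
`(1/s) ∫ (u - p_s u) v dm ≥ (1/t) ∫ (u - p_t u) v dm`. -/
theorem energy_ratio_monotone_as_t_decreases
    {E : Type*} [MeasurableSpace E] (m : Measure E) [SigmaFinite m]
    (p : ℝ → Kernel E E)
    (hsub : ∀ t : ℝ, 0 < t → ∀ x : E, p t x Set.univ ≤ 1)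
    (hsemi : ∀ s t : ℝ, 0 < s → 0 < t → ∀ f : E → ℝ≥0∞, Measurable f → ∀ x : E,
        ∫⁻ y, f y ∂(p (t + s) x) = ∫⁻ y, ∫⁻ z, f z ∂(p s y) ∂(p t x))
    (hsym : ∀ t : ℝ, 0 < t → ∀ f g : E → ℝ≥0∞, Measurable f → Measurable g →
        ∫⁻ x, (∫⁻ y, f y ∂(p t x)) * g x ∂m = ∫⁻ x, f x * ∫⁻ y, g y ∂(p t x) ∂m)
    (u v : E → ℝ≥0∞) (hu : Measurable u) (hv : Measurable v)
    (hufin : ∀ᵐ x ∂m, u x < ∞) (hvfin : ∀ᵐ x ∂m, v x < ∞)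
    (huexc : ∀ t : ℝ, 0 < t → (fun x => ∫⁻ y, u y ∂(p t x)) ≤ᵐ[m] u)
    (humono : ∀ s t : ℝ, 0 < s → s ≤ t →
        (fun x => ∫⁻ y, u y ∂(p t x)) ≤ᵐ[m] fun x => ∫⁻ y, u y ∂(p s x))
    (hulim : ∀ᵐ x ∂m, Tendsto (fun t : ℝ => ∫⁻ y, u y ∂(p t x))
        (nhdsWithin 0 (Set.Ioi 0)) (nhds (u x)))
    (hvexc : ∀ t : ℝ, 0 < t → (fun x => ∫⁻ y, v y ∂(p t x)) ≤ᵐ[m] v)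
    (hvmono : ∀ s t : ℝ, 0 < s → s ≤ t →
        (fun x => ∫⁻ y, v y ∂(p t x)) ≤ᵐ[m] fun x => ∫⁻ y, v y ∂(p s x))
    (hvlim : ∀ᵐ x ∂m, Tendsto (fun t : ℝ => ∫⁻ y, v y ∂(p t x))
        (nhdsWithin 0 (Set.Ioi 0)) (nhds (v x)))
    (s t : ℝ) (hs : 0 < s) (hst : s ≤ t) :
    (ENNReal.ofReal t)⁻¹ * ∫⁻ x, (u x - ∫⁻ y, u y ∂(p t x)) * v x ∂m
      ≤ (ENNReal.ofReal s)⁻¹ * ∫⁻ x, (u x - ∫⁻ y, u y ∂(p s x)) * v x ∂m :=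
  energy_ratio_monotone_as_t_decreases_general m p hsemi hsym u v hu hv hufin huexc hvexc s t hs hst
end

section
/- Let u be an almost-excessive function for (p_t) and let v be a nonnegative measurable function, finite m-a.e., which is p_t-invariant in the sense that p_t v = v m-a.e. for every t > 0. Then the quantity (1/t)∫_E (u − p_t u)·v dm is independent of t > 0. -/
/-!
For fixed `u` and `v` put `φ t = ∫ (u - p_t u) v dm`. Writing `u - p_{a+b} u` as
`(u - p_a u) + p_a (u - p_b u)` and moving `p_a` onto `v` by symmetry, where it disappears by
invariance, gives `φ (a + b) = φ a + φ b`. An additive `ℝ≥0∞`-valued function on `(0, ∞)` is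
monotone, and a monotone additive function is linear: `φ t = c t`.
-/

open MeasureTheory ProbabilityTheory Filter Topology
open scoped ENNReal

namespace ProbabilityTheory.Kernel

variable {E : Type*} [MeasurableSpace E]

def IsSymmetric (κ : Kernel E E) (m : Measure E) : Prop :=
  ∀ f g : E → ℝ≥0∞, Measurable f → Measurable g →
    ∫⁻ x, (∫⁻ y, f y ∂κ x) * g x ∂m = ∫⁻ x, f x * ∫⁻ y, g y ∂κ x ∂m

lemma IsSymmetric.comp_absolutelyContinuous {κ : Kernel E E} {m : Measure E}
    (hκ : κ.IsSymmetric m) : κ ∘ₘ m ≪ m := by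
  refine Measure.AbsolutelyContinuous.mk fun N hN hmN => ?_
  have h := hκ (N.indicator 1) 1 (measurable_one.indicator hN) measurable_one
  simp only [Pi.one_apply, mul_one, lintegral_indicator_one hN] at h
  rw [Measure.bind_apply hN κ.aemeasurable, h]
  refine (lintegral_congr_ae ?_).trans lintegral_zero
  filter_upwards [measure_eq_zero_iff_ae_notMem.1 hmN] with x hx
  simp [hx]

end ProbabilityTheory.Kernel

section AdditiveOnPositives

variable {φ : ℝ → ℝ≥0∞}

lemma map_natCast_mul_of_map_add (hφ : ∀ a b, 0 < a → 0 < b → φ (a + b) = φ a + φ b)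
    {a : ℝ} (ha : 0 < a) {n : ℕ} (hn : 1 ≤ n) : φ (n * a) = n * φ a := by
  induction n, hn using Nat.le_induction with
  | base => simp
  | succ n hn ih =>
    have hna : 0 < (n : ℝ) * a := by positivity
    push_cast
    rw [add_one_mul, hφ _ _ hna ha, ih, add_one_mul]

lemma monotoneOn_of_map_add (hφ : ∀ a b, 0 < a → 0 < b → φ (a + b) = φ a + φ b) :
    MonotoneOn φ (Set.Ioi 0) := by
  intro a ha c _ hac
  rcases hac.eq_or_lt with rfl | hlt
  · rfl
  · calc φ a ≤ φ a + φ (c - a) := le_self_add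
      _ = φ c := by rw [← hφ _ _ ha (sub_pos.2 hlt), add_sub_cancel]

lemma le_ofReal_div_mul_of_map_add (hφ : ∀ a b, 0 < a → 0 < b → φ (a + b) = φ a + φ b)
    {a b : ℝ} (ha : 0 < a) (hb : 0 < b) : φ a ≤ ENNReal.ofReal (a / b) * φ b := by
  have hbound : ∀ n : ℕ, 1 ≤ n →
      φ a ≤ ENNReal.ofReal (⌈a / b * n⌉₊ / n) * φ b := by
    -- `n φ(a) = φ(n a) ≤ φ(⌈n a / b⌉ b) = ⌈n a / b⌉ φ(b)`
    intro n hn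
    set k := ⌈a / b * n⌉₊
    have hn0 : (0 : ℝ) < n := by exact_mod_cast hn
    have hk : 1 ≤ k := Nat.one_le_iff_ne_zero.2 (Nat.ceil_pos.2 (by positivity)).ne'
    have hnak : n * a ≤ k * b :=
      calc (n : ℝ) * a = a / b * n * b := by field_simp
        _ ≤ k * b := by gcongr; exact Nat.le_ceil _
    have hna : (0 : ℝ) < n * a := by positivity
    have hkb : (0 : ℝ) < k * b := by positivity
    have hle : (n : ℝ≥0∞) * φ a ≤ n * (ENNReal.ofReal (k / n) * φ b) :=
      calc (n : ℝ≥0∞) * φ a = φ (n * a) := (map_natCast_mul_of_map_add hφ ha hn).symm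
        _ ≤ φ (k * b) := monotoneOn_of_map_add hφ hna hkb hnak
        _ = k * φ b := map_natCast_mul_of_map_add hφ hb hk
        _ = n * (ENNReal.ofReal (k / n) * φ b) := by
          rw [← mul_assoc, ← ENNReal.ofReal_natCast n, ← ENNReal.ofReal_mul hn0.le,
            mul_div_cancel₀ _ hn0.ne', ENNReal.ofReal_natCast]
    exact (ENNReal.mul_le_mul_iff_right (by simp; omega) (by simp)).1 hle
  rcases eq_or_ne (φ b) ∞ with hφb | hφb
  · simp [hφb, ENNReal.mul_top, div_pos ha hb]
  have hlim : Tendsto (fun n : ℕ => ENNReal.ofReal (⌈a / b * n⌉₊ / n) * φ b) atTop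
      (𝓝 (ENNReal.ofReal (a / b) * φ b)) :=
    ENNReal.Tendsto.mul_const (ENNReal.tendsto_ofReal
      ((tendsto_nat_ceil_mul_div_atTop (div_pos ha hb).le).comp tendsto_natCast_atTop_atTop))
      (Or.inr hφb)
  exact ge_of_tendsto hlim ((eventually_ge_atTop 1).mono hbound)

theorem inv_ofReal_mul_eq_of_map_add (hφ : ∀ a b, 0 < a → 0 < b → φ (a + b) = φ a + φ b)
    {s t : ℝ} (hs : 0 < s) (ht : 0 < t) :
    (ENNReal.ofReal s)⁻¹ * φ s = (ENNReal.ofReal t)⁻¹ * φ t := by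
  have key : ∀ {a b : ℝ}, 0 < a → 0 < b →
      (ENNReal.ofReal a)⁻¹ * φ a ≤ (ENNReal.ofReal b)⁻¹ * φ b := by
    intro a b ha hb
    calc (ENNReal.ofReal a)⁻¹ * φ a
        ≤ (ENNReal.ofReal a)⁻¹ * (ENNReal.ofReal (a / b) * φ b) := by
          gcongr; exact le_ofReal_div_mul_of_map_add hφ ha hb
      _ = (ENNReal.ofReal b)⁻¹ * φ b := by
          rw [ENNReal.ofReal_div_of_pos hb, div_eq_mul_inv, ← mul_assoc, ← mul_assoc,
            ENNReal.inv_mul_cancel (by simpa using ha) ENNReal.ofReal_ne_top, one_mul]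
  exact le_antisymm (key hs ht) (key ht hs)

end AdditiveOnPositives

section

variable {E : Type*} [MeasurableSpace E] {m : Measure E} {κ η ρ : Kernel E E} {u v : E → ℝ≥0∞}

lemma sub_lintegral_ae_eq_add_lintegral_sub
    (hκ : κ ∘ₘ m ≪ m) (hu : Measurable u) (hufin : ∀ᵐ x ∂m, u x < ∞)
    (hκu : (fun x => ∫⁻ y, u y ∂κ x) ≤ᵐ[m] u) (hηu : (fun x => ∫⁻ y, u y ∂η x) ≤ᵐ[m] u)
    (hρ : ∀ x, ∫⁻ y, u y ∂ρ x = ∫⁻ y, ∫⁻ z, u z ∂η y ∂κ x) :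
    (fun x => u x - ∫⁻ y, u y ∂ρ x) =ᵐ[m]
      fun x => (u x - ∫⁻ y, u y ∂κ x) + ∫⁻ y, (u y - ∫⁻ z, u z ∂η y) ∂κ x := by
  have hw : Measurable fun y => u y - ∫⁻ z, u z ∂η y := hu.sub hu.lintegral_kernel
  have hsplit : ∀ᵐ x ∂m,
      (∫⁻ y, (u y - ∫⁻ z, u z ∂η y) ∂κ x) + ∫⁻ y, u y ∂ρ x = ∫⁻ y, u y ∂κ x := by
    filter_upwards [Measure.ae_ae_of_ae_comp (hκ.ae_le hηu)] with x hx
    rw [hρ, ← lintegral_add_left hw]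
    exact lintegral_congr_ae (hx.mono fun y hy => tsub_add_cancel_of_le hy)
  filter_upwards [hsplit, hκu, hufin] with x hsplit hκx hux
  have hρκ : ∫⁻ y, u y ∂ρ x ≤ ∫⁻ y, u y ∂κ x := hsplit ▸ le_add_self
  rw [← tsub_add_tsub_cancel hκx hρκ, ← hsplit,
    ENNReal.add_sub_cancel_right ((hρκ.trans hκx).trans_lt hux).ne]

lemma lintegral_sub_lintegral_mul_eq_add
    (hκ : κ.IsSymmetric m) (hu : Measurable u) (hv : Measurable v) (hufin : ∀ᵐ x ∂m, u x < ∞)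
    (hκu : (fun x => ∫⁻ y, u y ∂κ x) ≤ᵐ[m] u) (hηu : (fun x => ∫⁻ y, u y ∂η x) ≤ᵐ[m] u)
    (hρ : ∀ x, ∫⁻ y, u y ∂ρ x = ∫⁻ y, ∫⁻ z, u z ∂η y ∂κ x)
    (hκv : (fun x => ∫⁻ y, v y ∂κ x) =ᵐ[m] v) :
    ∫⁻ x, (u x - ∫⁻ y, u y ∂ρ x) * v x ∂m =
      ∫⁻ x, (u x - ∫⁻ y, u y ∂κ x) * v x ∂m + ∫⁻ x, (u x - ∫⁻ y, u y ∂η x) * v x ∂m := by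
  have hw : Measurable fun y => u y - ∫⁻ z, u z ∂η y := hu.sub hu.lintegral_kernel
  have hwκ : Measurable fun x => (u x - ∫⁻ y, u y ∂κ x) * v x :=
    (hu.sub hu.lintegral_kernel).mul hv
  calc ∫⁻ x, (u x - ∫⁻ y, u y ∂ρ x) * v x ∂m
      = ∫⁻ x, (u x - ∫⁻ y, u y ∂κ x) * v x
          + (∫⁻ y, (u y - ∫⁻ z, u z ∂η y) ∂κ x) * v x ∂m := by
        refine lintegral_congr_ae ?_
        filter_upwards [sub_lintegral_ae_eq_add_lintegral_sub
          hκ.comp_absolutelyContinuous hu hufin hκu hηu hρ] with x hx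
        rw [hx, add_mul]
    _ = ∫⁻ x, (u x - ∫⁻ y, u y ∂κ x) * v x ∂m
          + ∫⁻ x, (u x - ∫⁻ y, u y ∂η x) * ∫⁻ y, v y ∂κ x ∂m := by
        rw [lintegral_add_left hwκ, hκ _ _ hw hv]
    _ = _ := by
        congr 1
        refine lintegral_congr_ae ?_
        filter_upwards [hκv] with x hx
        rw [hx]

end

theorem energy_ratio_invariant_general
    {E : Type*} [MeasurableSpace E] (m : Measure E)
    (p : ℝ → Kernel E E)
    (hsemi : ∀ s t : ℝ, 0 < s → 0 < t → ∀ f : E → ℝ≥0∞, Measurable f → ∀ x : E,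
        ∫⁻ y, f y ∂(p (t + s) x) = ∫⁻ y, ∫⁻ z, f z ∂(p s y) ∂(p t x))
    (hsym : ∀ t : ℝ, 0 < t → ∀ f g : E → ℝ≥0∞, Measurable f → Measurable g →
        ∫⁻ x, (∫⁻ y, f y ∂(p t x)) * g x ∂m = ∫⁻ x, f x * ∫⁻ y, g y ∂(p t x) ∂m)
    (u v : E → ℝ≥0∞) (hu : Measurable u) (hv : Measurable v)
    (hufin : ∀ᵐ x ∂m, u x < ∞)
    (huexc : ∀ t : ℝ, 0 < t → (fun x => ∫⁻ y, u y ∂(p t x)) ≤ᵐ[m] u)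
    (hvinv : ∀ t : ℝ, 0 < t → (fun x => ∫⁻ y, v y ∂(p t x)) =ᵐ[m] v)
    (s t : ℝ) (hs : 0 < s) (ht : 0 < t) :
    (ENNReal.ofReal s)⁻¹ * ∫⁻ x, (u x - ∫⁻ y, u y ∂(p s x)) * v x ∂m
      = (ENNReal.ofReal t)⁻¹ * ∫⁻ x, (u x - ∫⁻ y, u y ∂(p t x)) * v x ∂m := by
  refine inv_ofReal_mul_eq_of_map_add (φ := fun r => ∫⁻ x, (u x - ∫⁻ y, u y ∂(p r x)) * v x ∂m)
    (fun a b ha hb => ?_) hs ht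
  exact lintegral_sub_lintegral_mul_eq_add (hsym a ha) hu hv hufin (huexc a ha) (huexc b hb)
    (hsemi b a hb ha u hu) (hvinv a ha)

/-- Let `(p_t)_{t>0}` be a symmetric sub-Markovian semigroup of kernels on a
measurable space `E` with a σ-finite measure `m`.  Let `u` be almost-excessive for `(p_t)` and
let `v` be nonnegative measurable, finite `m`-a.e., and `p_t`-invariant (`p_t v = v` `m`-a.e.
for every `t > 0`).  Then the quantity `(1/t) ∫ (u - p_t u) v dm` is independent of `t > 0`. -/
theorem energy_ratio_invariant
    {E : Type*} [MeasurableSpace E] (m : Measure E) [SigmaFinite m]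
    (p : ℝ → Kernel E E)
    (hsub : ∀ t : ℝ, 0 < t → ∀ x : E, p t x Set.univ ≤ 1)
    (hsemi : ∀ s t : ℝ, 0 < s → 0 < t → ∀ f : E → ℝ≥0∞, Measurable f → ∀ x : E,
        ∫⁻ y, f y ∂(p (t + s) x) = ∫⁻ y, ∫⁻ z, f z ∂(p s y) ∂(p t x))
    (hsym : ∀ t : ℝ, 0 < t → ∀ f g : E → ℝ≥0∞, Measurable f → Measurable g →
        ∫⁻ x, (∫⁻ y, f y ∂(p t x)) * g x ∂m = ∫⁻ x, f x * ∫⁻ y, g y ∂(p t x) ∂m)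
    (u v : E → ℝ≥0∞) (hu : Measurable u) (hv : Measurable v)
    (hufin : ∀ᵐ x ∂m, u x < ∞) (hvfin : ∀ᵐ x ∂m, v x < ∞)
    (huexc : ∀ t : ℝ, 0 < t → (fun x => ∫⁻ y, u y ∂(p t x)) ≤ᵐ[m] u)
    (humono : ∀ s t : ℝ, 0 < s → s ≤ t →
        (fun x => ∫⁻ y, u y ∂(p t x)) ≤ᵐ[m] fun x => ∫⁻ y, u y ∂(p s x))
    (hulim : ∀ᵐ x ∂m, Tendsto (fun t : ℝ => ∫⁻ y, u y ∂(p t x))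
        (nhdsWithin 0 (Set.Ioi 0)) (nhds (u x)))
    (hvinv : ∀ t : ℝ, 0 < t → (fun x => ∫⁻ y, v y ∂(p t x)) =ᵐ[m] v)
    (s t : ℝ) (hs : 0 < s) (ht : 0 < t) :
    (ENNReal.ofReal s)⁻¹ * ∫⁻ x, (u x - ∫⁻ y, u y ∂(p s x)) * v x ∂m
      = (ENNReal.ofReal t)⁻¹ * ∫⁻ x, (u x - ∫⁻ y, u y ∂(p t x)) * v x ∂m :=
  energy_ratio_invariant_general m p hsemi hsym u v hu hv hufin huexc hvinv s t hs ht
end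

section
/- Let e : (0,∞) → [0,∞] be a measurable function such that the ratio e(t)/t is nonincreasing in t (equivalently, nondecreasing as t ↓ 0). Then for every α > 0 one has the identity α² ∫_0^∞ e^{−αs} e(s) ds = ∫_0^∞ t e^{−t} · (e(t/α)/(t/α)) dt, the left-hand side is nondecreasing in α, and as α → ∞ it converges (as an increasing limit in [0,∞]) to lim_{t↓0} e(t)/t. -/
/-!
The substitution `s = t / α` rewrites `α² ∫ e^{-αs} e(s) ds` as the average of the ratio
`φ(t / α) = e(t / α) / (t / α)` against the probability density `t e^{-t}` on `(0, ∞)`.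
As `α` grows, `t / α` decreases, so by the monotonicity of `φ` the integrand increases pointwise to
`lim_{s ↓ 0} φ(s)`, and monotone convergence gives the limit.
-/

open MeasureTheory Filter Set Real
open scoped ENNReal Topology

theorem setLIntegral_Ioi_comp_div (g : ℝ → ℝ≥0∞) {α : ℝ} (hα : 0 < α) :
    ∫⁻ t in Ioi 0, g (t / α) = ENNReal.ofReal α * ∫⁻ s in Ioi 0, g s := by
  let f := Homeomorph.mulLeft₀ α⁻¹ (inv_ne_zero hα.ne')
  have hf : MeasurableEmbedding f := f.measurableEmbedding
  have hpre : f ⁻¹' Ioi 0 = Ioi 0 := preimage_const_mul_Ioi₀ 0 (inv_pos.2 hα) ▸ by simp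
  calc ∫⁻ t in Ioi 0, g (t / α) = ∫⁻ t in f ⁻¹' Ioi 0, g (f t) := by
        rw [hpre]; simp [f, div_eq_inv_mul]
    _ = ∫⁻ s in Ioi 0, g s ∂(volume.map f) := by
        rw [hf.restrict_map, hf.lintegral_map]
    _ = ENNReal.ofReal α * ∫⁻ s in Ioi 0, g s := by
        rw [show (f : ℝ → ℝ) = (α⁻¹ * ·) from rfl, Real.map_volume_mul_left (inv_ne_zero hα.ne'),
          Measure.restrict_smul, lintegral_smul_measure, inv_inv, abs_of_pos hα, smul_eq_mul]

theorem integral_Ioi_mul_exp_neg : ∫ t in Ioi (0 : ℝ), t * exp (-t) = 1 := by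
  rw [← Real.Gamma_two, Real.Gamma_eq_integral two_pos]
  refine setIntegral_congr_fun measurableSet_Ioi fun t _ => ?_
  norm_num [mul_comm]

theorem setLIntegral_Ioi_mul_exp_neg : ∫⁻ t in Ioi (0 : ℝ), ENNReal.ofReal (t * exp (-t)) = 1 := by
  rw [← ofReal_integral_eq_lintegral_ofReal
    (Integrable.of_integral_ne_zero (integral_Ioi_mul_exp_neg ▸ one_ne_zero))
    ((ae_restrict_iff' measurableSet_Ioi).2 (ae_of_all _ fun t (ht : 0 < t) => by positivity)),
    integral_Ioi_mul_exp_neg, ENNReal.ofReal_one]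

theorem ENNReal.ofReal_mul_div_ofReal_div {x α : ℝ} (hx : 0 < x) (hα : 0 < α) (a : ℝ≥0∞) :
    ENNReal.ofReal x * (a / ENNReal.ofReal (x / α)) = ENNReal.ofReal α * a := by
  rw [div_eq_mul_inv, ← ENNReal.ofReal_inv_of_pos (div_pos hx hα), inv_div, mul_left_comm,
    ← ENNReal.ofReal_mul hx.le, mul_div_cancel₀ _ hx.ne', mul_comm]

theorem Monotone.tendsto_atTop_of_tendsto_comp {α β γ : Type*} [Preorder β] [Preorder γ]
    [CompleteLinearOrder α] [TopologicalSpace α] [OrderTopology α] [(atTop : Filter γ).NeBot]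
    {f : β → α} (hf : Monotone f) {u : γ → β} (hu : Tendsto u atTop atTop) {l : α}
    (h : Tendsto (f ∘ u) atTop (𝓝 l)) : Tendsto f atTop (𝓝 l) := by
  have hsup := tendsto_atTop_iSup hf
  rwa [tendsto_nhds_unique (hsup.comp hu) h] at hsup

section

variable {w φ : ℝ → ℝ≥0∞}

theorem monotoneOn_setLIntegral_mul_comp_div (hφ : AntitoneOn φ (Ioi 0)) :
    MonotoneOn (fun α => ∫⁻ t in Ioi 0, w t * φ (t / α)) (Ioi 0) := by
  intro α (hα : 0 < α) β (hβ : 0 < β) hαβ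
  refine setLIntegral_mono' measurableSet_Ioi fun t (ht : 0 < t) => ?_
  gcongr
  exact hφ (div_pos ht hβ) (div_pos ht hα) (div_le_div_of_nonneg_left ht.le hα hαβ)

theorem tendsto_setLIntegral_mul_comp_div (hw : AEMeasurable w (volume.restrict (Ioi 0)))
    (hw_one : ∫⁻ t in Ioi 0, w t = 1) (hφ : AntitoneOn φ (Ioi 0)) {L : ℝ≥0∞}
    (hL : Tendsto φ (𝓝[>] 0) (𝓝 L)) {u : ℕ → ℝ} (hu_pos : ∀ n, 0 < u n) (hu_mono : Monotone u)
    (hu_top : Tendsto u atTop atTop) :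
    Tendsto (fun n => ∫⁻ t in Ioi 0, w t * φ (t / u n)) atTop (𝓝 L) := by
  have hmeas : ∀ n, AEMeasurable (fun t => w t * φ (t / u n)) (volume.restrict (Ioi 0)) :=
    fun n => hw.mul <| aemeasurable_restrict_of_antitoneOn measurableSet_Ioi
      fun s (hs : 0 < s) t (ht : 0 < t) hst => hφ (div_pos hs (hu_pos n)) (div_pos ht (hu_pos n))
        (div_le_div_of_nonneg_right hst (hu_pos n).le)
  have hmono : ∀ᵐ t ∂volume.restrict (Ioi 0), Monotone fun n => w t * φ (t / u n) := by
    refine (ae_restrict_iff' measurableSet_Ioi).2 (ae_of_all _ fun t (ht : 0 < t) n m hnm => ?_)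
    exact mul_le_mul_right (hφ (div_pos ht (hu_pos m)) (div_pos ht (hu_pos n))
      (div_le_div_of_nonneg_left ht.le (hu_pos n) (hu_mono hnm))) _
  have hlim : ∀ᵐ t ∂volume.restrict (Ioi 0),
      Tendsto (fun n => w t * φ (t / u n)) atTop (𝓝 (w t * L)) := by
    -- finiteness of `w t` rules out `∞ * φ (t / u n) = ∞` against a limit `∞ * 0 = 0`
    filter_upwards [ae_lt_top' hw (hw_one ▸ ENNReal.one_ne_top), ae_restrict_mem measurableSet_Ioi]
      with t hwt (ht : 0 < t)
    have hdiv : Tendsto (fun n => t / u n) atTop (𝓝[>] 0) :=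
      tendsto_nhdsWithin_iff.2 ⟨tendsto_const_nhds.div_atTop hu_top,
        Eventually.of_forall fun n => div_pos ht (hu_pos n)⟩
    exact ENNReal.Tendsto.const_mul (hL.comp hdiv) (Or.inr hwt.ne)
  simpa only [lintegral_mul_const'' L hw, hw_one, one_mul] using
    lintegral_tendsto_of_tendsto_of_monotone hmeas hmono hlim

end

noncomputable def scaledLaplace (e : ℝ → ℝ≥0∞) (α : ℝ) : ℝ≥0∞ :=
  ENNReal.ofReal α ^ 2 * ∫⁻ s in Ioi 0, ENNReal.ofReal (exp (-(α * s))) * e s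

section

variable {e : ℝ → ℝ≥0∞}

theorem scaledLaplace_of_nonpos {α : ℝ} (hα : α ≤ 0) : scaledLaplace e α = 0 := by
  simp [scaledLaplace, ENNReal.ofReal_of_nonpos hα]

theorem scaledLaplace_eq_setLIntegral_ratio {α : ℝ} (hα : 0 < α) :
    scaledLaplace e α =
      ∫⁻ t in Ioi 0, ENNReal.ofReal (t * exp (-t)) * (e (t / α) / ENNReal.ofReal (t / α)) := by
  have hpt : ∀ t ∈ Ioi (0 : ℝ),
      ENNReal.ofReal (t * exp (-t)) * (e (t / α) / ENNReal.ofReal (t / α)) =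
        ENNReal.ofReal α * (ENNReal.ofReal (exp (-(α * (t / α)))) * e (t / α)) := by
    intro t (ht : 0 < t)
    rw [mul_div_cancel₀ t hα.ne', ENNReal.ofReal_mul ht.le, mul_right_comm,
      ENNReal.ofReal_mul_div_ofReal_div ht hα, mul_assoc, mul_comm (e _)]
  rw [setLIntegral_congr_fun measurableSet_Ioi hpt, lintegral_const_mul' _ _ ENNReal.ofReal_ne_top,
    setLIntegral_Ioi_comp_div (fun s => ENNReal.ofReal (exp (-(α * s))) * e s) hα, ← mul_assoc,
    ← sq, scaledLaplace]

theorem monotone_scaledLaplace (he : AntitoneOn (fun t => e t / ENNReal.ofReal t) (Ioi 0)) :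
    Monotone (scaledLaplace e) := by
  intro α β hαβ
  rcases le_or_gt α 0 with hα | hα
  · simp [scaledLaplace_of_nonpos hα]
  · have hβ := hα.trans_le hαβ
    rw [scaledLaplace_eq_setLIntegral_ratio hα, scaledLaplace_eq_setLIntegral_ratio hβ]
    exact monotoneOn_setLIntegral_mul_comp_div he hα hβ hαβ

theorem tendsto_scaledLaplace_atTop (he : AntitoneOn (fun t => e t / ENNReal.ofReal t) (Ioi 0))
    {L : ℝ≥0∞} (hL : Tendsto (fun t => e t / ENNReal.ofReal t) (𝓝[>] 0) (𝓝 L)) :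
    Tendsto (scaledLaplace e) atTop (𝓝 L) := by
  refine (monotone_scaledLaplace he).tendsto_atTop_of_tendsto_comp
    (tendsto_atTop_add_const_right _ 1 tendsto_natCast_atTop_atTop) ?_
  have hw : AEMeasurable (fun t : ℝ => ENNReal.ofReal (t * exp (-t))) (volume.restrict (Ioi 0)) := by
    fun_prop
  simpa only [Function.comp_def, scaledLaplace_eq_setLIntegral_ratio (Nat.cast_add_one_pos _)]
    using tendsto_setLIntegral_mul_comp_div hw setLIntegral_Ioi_mul_exp_neg he hL
      (fun n => Nat.cast_add_one_pos n) (fun n m hnm => by gcongr)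
      (tendsto_atTop_add_const_right _ 1 tendsto_natCast_atTop_atTop)

end

theorem laplace_ratio_limit_general
    (e : ℝ → ℝ≥0∞)
    (hmono : ∀ s t : ℝ, 0 < s → s ≤ t →
        e t / ENNReal.ofReal t ≤ e s / ENNReal.ofReal s) :
    (∀ α : ℝ, 0 < α →
        (ENNReal.ofReal α) ^ 2 *
            ∫⁻ s in Set.Ioi (0 : ℝ), ENNReal.ofReal (Real.exp (-(α * s))) * e s
          = ∫⁻ t in Set.Ioi (0 : ℝ),
              ENNReal.ofReal (t * Real.exp (-t)) * (e (t / α) / ENNReal.ofReal (t / α))) ∧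
    (∀ α β : ℝ, 0 < α → α ≤ β →
        (ENNReal.ofReal α) ^ 2 *
            ∫⁻ s in Set.Ioi (0 : ℝ), ENNReal.ofReal (Real.exp (-(α * s))) * e s
          ≤ (ENNReal.ofReal β) ^ 2 *
            ∫⁻ s in Set.Ioi (0 : ℝ), ENNReal.ofReal (Real.exp (-(β * s))) * e s) ∧
    (∃ L : ℝ≥0∞,
        Tendsto (fun t : ℝ => e t / ENNReal.ofReal t) (nhdsWithin 0 (Set.Ioi 0)) (nhds L) ∧
        Tendsto (fun α : ℝ =>
            (ENNReal.ofReal α) ^ 2 *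
              ∫⁻ s in Set.Ioi (0 : ℝ), ENNReal.ofReal (Real.exp (-(α * s))) * e s)
          atTop (nhds L)) := by
  have hratio : AntitoneOn (fun t => e t / ENNReal.ofReal t) (Ioi 0) :=
    fun s hs t _ hst => hmono s t hs hst
  have hL := hratio.tendsto_nhdsGT (OrderTop.bddAbove _)
  exact ⟨fun _ => scaledLaplace_eq_setLIntegral_ratio,
    fun _ _ _ hαβ => monotone_scaledLaplace hratio hαβ, _, hL, tendsto_scaledLaplace_atTop hratio hL⟩

/-- Let `e : (0,∞) → [0,∞]` be measurable with `e(t)/t` nonincreasing in `t`.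
Then for every `α > 0`,
`α² ∫_0^∞ exp(-αs) e(s) ds = ∫_0^∞ t exp(-t) (e(t/α)/(t/α)) dt`,
the left-hand side is nondecreasing in `α`, and as `α → ∞` it converges (as an increasing limit
in `[0,∞]`) to `lim_{t↓0} e(t)/t` (which exists by the assumed monotonicity). -/
theorem laplace_ratio_limit
    (e : ℝ → ℝ≥0∞) (he : Measurable e)
    (hmono : ∀ s t : ℝ, 0 < s → s ≤ t →
        e t / ENNReal.ofReal t ≤ e s / ENNReal.ofReal s) :
    (∀ α : ℝ, 0 < α →
        (ENNReal.ofReal α) ^ 2 *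
            ∫⁻ s in Set.Ioi (0 : ℝ), ENNReal.ofReal (Real.exp (-(α * s))) * e s
          = ∫⁻ t in Set.Ioi (0 : ℝ),
              ENNReal.ofReal (t * Real.exp (-t)) * (e (t / α) / ENNReal.ofReal (t / α))) ∧
    (∀ α β : ℝ, 0 < α → α ≤ β →
        (ENNReal.ofReal α) ^ 2 *
            ∫⁻ s in Set.Ioi (0 : ℝ), ENNReal.ofReal (Real.exp (-(α * s))) * e s
          ≤ (ENNReal.ofReal β) ^ 2 *
            ∫⁻ s in Set.Ioi (0 : ℝ), ENNReal.ofReal (Real.exp (-(β * s))) * e s) ∧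
    (∃ L : ℝ≥0∞,
        Tendsto (fun t : ℝ => e t / ENNReal.ofReal t) (nhdsWithin 0 (Set.Ioi 0)) (nhds L) ∧
        Tendsto (fun α : ℝ =>
            (ENNReal.ofReal α) ^ 2 *
              ∫⁻ s in Set.Ioi (0 : ℝ), ENNReal.ofReal (Real.exp (-(α * s))) * e s)
          atTop (nhds L)) :=
  laplace_ratio_limit_general e hmono
end

section
/- Let d ≥ 2, R > 0, and let ξ, η ∈ Σ_R with ξ ≠ η. Write K_i(x) = (R² − ‖x‖²)/(Ω_d R ‖x − η‖^d) (interior Poisson kernel) and K_e(x) = (‖x‖² − R²)/(Ω_d R ‖x − η‖^d) (exterior Poisson kernel). Then the half-sum of the inward and outward normal derivatives at ξ equals the Feller kernel of the sphere: (1/2)·(d/ds)|_{s=0} K_i(ξ − s ξ/R) + (1/2)·(d/ds)|_{s=0} K_e(ξ + s ξ/R) = 2/(Ω_d ‖ξ − η‖^d). -/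
open MeasureTheory

/-- The surface area `Ω_d` of the unit sphere in `ℝ^d`, i.e. the `(d-1)`-dimensional Hausdorff
measure of `{x : ‖x‖ = 1}`. -/
noncomputable def unitSphereArea (d : ℕ) : ℝ :=
  (μH[(d : ℝ) - 1] (Metric.sphere (0 : EuclideanSpace ℝ (Fin d)) 1)).toReal

/-! Both numerators vanish at `ξ` and have normal derivative `2R` there, since
`‖ξ ± s ξ/R‖² = (R ± s)²`. So each normal derivative is `2R / (Ω_d R ‖ξ - η‖^d)`, and the
half-sum is `2 / (Ω_d ‖ξ - η‖^d)`. -/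

-- `c⁻¹ * _` commutes with `deriv` for every `c`, so `c = 0` (junk division) needs no
-- separate case.
theorem deriv_div_const_mul_of_apply_eq_zero {f g : ℝ → ℝ} {x f' : ℝ} (c : ℝ)
    (hf : HasDerivAt f f' x) (hfx : f x = 0) (hg : DifferentiableAt ℝ g x) (hgx : g x ≠ 0) :
    deriv (fun s => f s / (c * g s)) x = f' / (c * g x) := by
  have hquot : deriv (fun s => f s / g s) x = f' / g x := by
    rw [(hf.fun_div hg.hasDerivAt hgx).deriv, hfx, zero_mul, sub_zero, sq,
      mul_div_mul_right _ _ hgx]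
  calc deriv (fun s => f s / (c * g s)) x = deriv (fun s => c⁻¹ * (f s / g s)) x := by
        congr 1; funext s; rw [mul_comm c, ← div_div, div_eq_inv_mul _ c]
    _ = f' / (c * g x) := by
        rw [deriv_const_mul_field, hquot, mul_comm c, ← div_div, div_eq_inv_mul _ c]

section Normal

variable {E : Type*} [NormedAddCommGroup E] [NormedSpace ℝ E] {ξ : E} {R : ℝ}

theorem norm_add_smul_inv_smul_sq (hξ : ‖ξ‖ = R) (hR : R ≠ 0) (s : ℝ) :
    ‖ξ + s • (R⁻¹ • ξ)‖ ^ 2 = (R + s) ^ 2 := by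
  rw [show ξ + s • (R⁻¹ • ξ) = (1 + s * R⁻¹) • ξ by module, norm_smul, mul_pow,
    Real.norm_eq_abs, sq_abs, hξ]
  field_simp

theorem norm_sub_smul_inv_smul_sq (hξ : ‖ξ‖ = R) (hR : R ≠ 0) (s : ℝ) :
    ‖ξ - s • (R⁻¹ • ξ)‖ ^ 2 = (R - s) ^ 2 := by
  rw [sub_eq_add_neg, ← neg_smul, norm_add_smul_inv_smul_sq hξ hR, sub_eq_add_neg]

theorem hasDerivAt_sq_sub_norm_sub_smul_inv_smul_sq (hξ : ‖ξ‖ = R) (hR : R ≠ 0) :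
    HasDerivAt (fun s : ℝ => R ^ 2 - ‖ξ - s • (R⁻¹ • ξ)‖ ^ 2) (2 * R) 0 := by
  simp_rw [norm_sub_smul_inv_smul_sq hξ hR]
  simpa using (((hasDerivAt_id (0 : ℝ)).const_sub R).pow 2).const_sub (R ^ 2)

theorem hasDerivAt_norm_add_smul_inv_smul_sq_sub_sq (hξ : ‖ξ‖ = R) (hR : R ≠ 0) :
    HasDerivAt (fun s : ℝ => ‖ξ + s • (R⁻¹ • ξ)‖ ^ 2 - R ^ 2) (2 * R) 0 := by
  simp_rw [norm_add_smul_inv_smul_sq hξ hR]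
  simpa using (((hasDerivAt_id (0 : ℝ)).const_add R).pow 2).sub_const (R ^ 2)

end Normal

section Distance

variable {E : Type*} [NormedAddCommGroup E] [InnerProductSpace ℝ E] {ξ η : E}

theorem differentiableAt_norm_add_smul_sub_pow (v : E) (hne : ξ ≠ η) (n : ℕ) :
    DifferentiableAt ℝ (fun s : ℝ => ‖ξ + s • v - η‖ ^ n) 0 := by
  refine (DifferentiableAt.norm ℝ ?_ (by simpa [sub_eq_zero] using hne)).pow n
  fun_prop

theorem differentiableAt_norm_sub_smul_sub_pow (v : E) (hne : ξ ≠ η) (n : ℕ) :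
    DifferentiableAt ℝ (fun s : ℝ => ‖ξ - s • v - η‖ ^ n) 0 := by
  simpa only [sub_eq_add_neg ξ, smul_neg] using differentiableAt_norm_add_smul_sub_pow (-v) hne n

end Distance

theorem feller_kernel_of_sphere_general
    (d : ℕ) (R : ℝ) (hR : 0 < R)
    (ξ η : EuclideanSpace ℝ (Fin d)) (hξ : ‖ξ‖ = R) (hne : ξ ≠ η) :
    (1 / 2) * deriv (fun s : ℝ =>
        (R ^ 2 - ‖ξ - s • (R⁻¹ • ξ)‖ ^ 2) /
          (unitSphereArea d * R * ‖(ξ - s • (R⁻¹ • ξ)) - η‖ ^ d)) 0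
      + (1 / 2) * deriv (fun s : ℝ =>
        (‖ξ + s • (R⁻¹ • ξ)‖ ^ 2 - R ^ 2) /
          (unitSphereArea d * R * ‖(ξ + s • (R⁻¹ • ξ)) - η‖ ^ d)) 0
      = 2 / (unitSphereArea d * ‖ξ - η‖ ^ d) := by
  have hdist : ‖ξ - η‖ ^ d ≠ 0 := pow_ne_zero _ (norm_ne_zero_iff.mpr (sub_ne_zero.mpr hne))
  rw [deriv_div_const_mul_of_apply_eq_zero _
      (hasDerivAt_sq_sub_norm_sub_smul_inv_smul_sq hξ hR.ne') (by simp [hξ])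
      (differentiableAt_norm_sub_smul_sub_pow _ hne d) (by simpa using hdist),
    deriv_div_const_mul_of_apply_eq_zero _
      (hasDerivAt_norm_add_smul_inv_smul_sq_sub_sq hξ hR.ne') (by simp [hξ])
      (differentiableAt_norm_add_smul_sub_pow _ hne d) (by simpa using hdist)]
  simp only [zero_smul, sub_zero, add_zero]
  rw [mul_right_comm _ R, ← mul_div_mul_right 2 _ hR.ne']
  ring

/-- Let `d ≥ 2`, `R > 0` and `ξ, η ∈ Σ_R` with `ξ ≠ η`.  Writing
`K_i(x) = (R² - ‖x‖²)/(Ω_d R ‖x - η‖^d)` for the interior Poisson kernel and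
`K_e(x) = (‖x‖² - R²)/(Ω_d R ‖x - η‖^d)` for the exterior Poisson kernel, the half-sum of the
inward normal derivative of `K_i` and the outward normal derivative of `K_e` at `ξ` equals the
Feller kernel of the sphere:
`(1/2) (d/ds)|₀ K_i(ξ - s ξ/R) + (1/2) (d/ds)|₀ K_e(ξ + s ξ/R) = 2/(Ω_d ‖ξ - η‖^d)`. -/
theorem feller_kernel_of_sphere
    (d : ℕ) (hd : 2 ≤ d) (R : ℝ) (hR : 0 < R)
    (ξ η : EuclideanSpace ℝ (Fin d)) (hξ : ‖ξ‖ = R) (hη : ‖η‖ = R) (hne : ξ ≠ η) :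
    (1 / 2) * deriv (fun s : ℝ =>
        (R ^ 2 - ‖ξ - s • (R⁻¹ • ξ)‖ ^ 2) /
          (unitSphereArea d * R * ‖(ξ - s • (R⁻¹ • ξ)) - η‖ ^ d)) 0
      + (1 / 2) * deriv (fun s : ℝ =>
        (‖ξ + s • (R⁻¹ • ξ)‖ ^ 2 - R ^ 2) /
          (unitSphereArea d * R * ‖(ξ + s • (R⁻¹ • ξ)) - η‖ ^ d)) 0
      = 2 / (unitSphereArea d * ‖ξ - η‖ ^ d) :=
  feller_kernel_of_sphere_general d R hR ξ η hξ hne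
end
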